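/- Let d > 1. There is a constant C > 0, depending only on d, such that for all n, all positive integers κ_n ≤ n − 1, and all 1 ≤ k ≤ m_n: Ξ_k ≤ C (n − k + 1)^{2−1/d}. Furthermore, for 2 ≤ k ≤ m_n: n^{2−1/d} I_{(κ_n−1)/n}((n−k)/n) ≤ Ξ_k ≤ n^{2−1/d} I_0((n−k+2)/n), where I_a(t) = ∫_a^t x^{1−1/d}(1−x)^{1/d−1} dx for 0 ≤ a ≤ t ≤ 1. -/

import Mathlib

/-!
Write `α = 1 - 1/d ∈ [0, 1)`. By the telescoping bounds `1/v - 1/(v+1) ≤ 1/v² ≤ 1/(v-1) - 1/v`,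
the mean `E Y_i = ∑_{v=n-i+1}^{n} v⁻²` lies between `1/(n-i+1) - 1/(n+1)` and `1/(n-i) - 1/n`.
For `0 < u ≤ N` one has `(1/u - 1/N)^(-α) = N^α f(u/N)` with `f(x) = x^α (1-x)^(-α)`, and `f` is
increasing on `[0, 1)` and integrable on `[0, 1]`. So every summand of `Ξ_k` is squeezed between
two consecutive values `N^α f(a/N)`, `N^α f((a+1)/N)`, and comparing these monotone sums with
integrals and substituting `x = u/n` gives both bounds of the second claim. The first claim is the
upper comparison with `N = n + 1` (which also covers the summand `i = 1`) together with
`∫_0^t f ≤ t^(1+α)/(1-α)`, from `x^α ≤ t^α` and `(1-t)^(1-α) ≥ 1-t`.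
-/

open MeasureTheory ProbabilityTheory Filter Real
open scoped ProbabilityTheory ENNReal

open Set intervalIntegral

lemma toNNReal_exponentialPDFReal_smul {r : ℝ} (hr : 0 < r) :
    (fun x : ℝ => (exponentialPDFReal r x).toNNReal • x)
      = (Ici 0).indicator (fun x => r * (x * exp (-(r * x)))) := by
  ext x
  by_cases hx : 0 ≤ x
  · rw [indicator_of_mem (mem_Ici.2 hx), NNReal.smul_def, smul_eq_mul,
      Real.coe_toNNReal _ (exponentialPDFReal_nonneg hr x)]
    simp only [exponentialPDFReal, gammaPDFReal, hx, if_true, rpow_one, Gamma_one, div_one,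
      sub_self, rpow_zero, mul_one]
    ring
  · rw [indicator_of_notMem (mt mem_Ici.1 hx)]
    simp [exponentialPDFReal, gammaPDFReal, hx]

lemma integrableOn_mul_exp_neg_mul {r : ℝ} (hr : 0 < r) :
    IntegrableOn (fun x : ℝ => x * exp (-(r * x))) (Ioi 0) := by
  simpa [Real.rpow_one, neg_mul] using
    integrableOn_rpow_mul_exp_neg_mul_rpow (p := 1) (s := 1) (by norm_num) one_pos hr

lemma integrable_id_expMeasure {r : ℝ} (hr : 0 < r) :
    Integrable (fun x : ℝ => x) (expMeasure r) := by
  change Integrable _ (volume.withDensity fun x => ((exponentialPDFReal r x).toNNReal : ℝ≥0∞))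
  rw [integrable_withDensity_iff_integrable_smul (measurable_exponentialPDFReal r).real_toNNReal,
    toNNReal_exponentialPDFReal_smul hr, integrable_indicator_iff measurableSet_Ici,
    integrableOn_Ici_iff_integrableOn_Ioi]
  exact (integrableOn_mul_exp_neg_mul hr).const_mul r

lemma integral_id_expMeasure {r : ℝ} (hr : 0 < r) : ∫ x, x ∂expMeasure r = r⁻¹ := by
  change ∫ x, x ∂(volume.withDensity fun x => ((exponentialPDFReal r x).toNNReal : ℝ≥0∞)) = _
  rw [integral_withDensity_eq_integral_smul (measurable_exponentialPDFReal r).real_toNNReal,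
    toNNReal_exponentialPDFReal_smul hr, MeasureTheory.integral_indicator measurableSet_Ici,
    integral_Ici_eq_integral_Ioi, MeasureTheory.integral_const_mul]
  have h := integral_rpow_mul_exp_neg_mul_Ioi (a := 2) (r := r) (by norm_num) hr
  norm_num [Real.Gamma_two] at h
  rw [h]
  field_simp

lemma integral_eq_inv_of_map_eq_expMeasure {Ω : Type*} [MeasurableSpace Ω] {μ : Measure Ω}
    {X : Ω → ℝ} {r : ℝ} (hX : Measurable X) (hr : 0 < r) (hlaw : μ.map X = expMeasure r) :
    Integrable X μ ∧ ∫ ω, X ω ∂μ = r⁻¹ := by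
  have hid : AEStronglyMeasurable (fun x : ℝ => x) (μ.map X) := aestronglyMeasurable_id
  refine ⟨?_, ?_⟩
  · have h := integrable_map_measure hid hX.aemeasurable
    rw [hlaw] at h
    exact h.1 (integrable_id_expMeasure hr)
  · rw [← integral_map hX.aemeasurable hid, hlaw, integral_id_expMeasure hr]

lemma Finset.sum_Icc_comp_sub {M : Type*} [AddCommMonoid M] (f : ℕ → M) {k m n : ℕ}
    (hk : k ≤ n) (hm : m ≤ n) :
    ∑ i ∈ Finset.Icc k m, f (n - i) = ∑ a ∈ Finset.Icc (n - m) (n - k), f a :=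
  Finset.sum_nbij' (n - ·) (n - ·) (by intro i; simp only [Finset.mem_Icc]; omega)
    (by intro a; simp only [Finset.mem_Icc]; omega)
    (by intro i; simp only [Finset.mem_Icc]; omega)
    (by intro a; simp only [Finset.mem_Icc]; omega) (fun _ _ => rfl)

noncomputable def tailInvSq (n a : ℕ) : ℝ := ∑ b ∈ Finset.Ico a n, (((b + 1 : ℕ) : ℝ) ^ 2)⁻¹

lemma tailInvSq_le {n a : ℕ} (ha : 0 < a) (han : a ≤ n) :
    tailInvSq n a ≤ (a : ℝ)⁻¹ - (n : ℝ)⁻¹ := by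
  induction n, han using Nat.le_induction with
  | base => simp [tailInvSq]
  | succ n han ih =>
    rw [tailInvSq, Finset.sum_Ico_succ_top han, ← tailInvSq]
    have hn : (0 : ℝ) < n := by exact_mod_cast ha.trans_le han
    have hstep : (((n + 1 : ℕ) : ℝ) ^ 2)⁻¹ ≤ (n : ℝ)⁻¹ - ((n + 1 : ℕ) : ℝ)⁻¹ := by
      push_cast
      rw [inv_sub_inv hn.ne' (by positivity), add_sub_cancel_left, one_div]
      gcongr
      nlinarith
    linarith

lemma inv_sub_inv_le_tailInvSq {n a : ℕ} (han : a ≤ n) :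
    ((a : ℝ) + 1)⁻¹ - ((n : ℝ) + 1)⁻¹ ≤ tailInvSq n a := by
  induction n, han using Nat.le_induction with
  | base => simp [tailInvSq]
  | succ n han ih =>
    rw [tailInvSq, Finset.sum_Ico_succ_top han, ← tailInvSq]
    have hstep : ((n : ℝ) + 1)⁻¹ - ((n + 1 : ℕ) + 1 : ℝ)⁻¹ ≤ (((n + 1 : ℕ) : ℝ) ^ 2)⁻¹ := by
      push_cast
      rw [inv_sub_inv (by positivity) (by positivity), add_sub_cancel_left, one_div]
      gcongr
      nlinarith
    linarith

lemma tailInvSq_pos {n a : ℕ} (han : a < n) : 0 < tailInvSq n a :=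
  Finset.sum_pos (fun _ _ => by positivity) (by simpa using han)

lemma integral_sum_eq_tailInvSq {Ω : Type*} [MeasurableSpace Ω] {μ : Measure Ω}
    {X : ℕ → Ω → ℝ} {n i : ℕ} (hX : ∀ j, Measurable (X j))
    (hlaw : ∀ j, 1 ≤ j → j ≤ n → μ.map (X j) = expMeasure (((n - j + 1 : ℕ) : ℝ) ^ 2))
    (hi : 1 ≤ i) (hin : i ≤ n) :
    ∫ ω, ∑ j ∈ Finset.Icc 1 i, X j ω ∂μ = tailInvSq n (n - i) := by
  have hXj : ∀ j ∈ Finset.Icc 1 i,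
      Integrable (X j) μ ∧ ∫ ω, X j ω ∂μ = (((n - j + 1 : ℕ) : ℝ) ^ 2)⁻¹ := fun j hj =>
    integral_eq_inv_of_map_eq_expMeasure (hX j) (by positivity)
      (hlaw j (Finset.mem_Icc.1 hj).1 ((Finset.mem_Icc.1 hj).2.trans hin))
  rw [integral_finsetSum _ fun j hj => (hXj j hj).1, Finset.sum_congr rfl fun j hj => (hXj j hj).2,
    Finset.sum_Icc_comp_sub (fun b => (((b + 1 : ℕ) : ℝ) ^ 2)⁻¹) (hi.trans hin) hin,
    tailInvSq, ← Finset.Ico_add_one_right_eq_Icc, Nat.sub_add_cancel (hi.trans hin)]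

lemma sum_integral_rpow_eq_sum_tailInvSq {Ω : Type*} [MeasurableSpace Ω] {μ : Measure Ω}
    {X : ℕ → Ω → ℝ} {n k m : ℕ} (s : ℝ) (hX : ∀ j, Measurable (X j))
    (hlaw : ∀ j, 1 ≤ j → j ≤ n → μ.map (X j) = expMeasure (((n - j + 1 : ℕ) : ℝ) ^ 2))
    (hk : 1 ≤ k) (hkm : k ≤ m) (hm : m ≤ n) :
    ∑ i ∈ Finset.Icc k m, (∫ ω, ∑ j ∈ Finset.Icc 1 i, X j ω ∂μ) ^ s
      = ∑ a ∈ Finset.Icc (n - m) (n - k), tailInvSq n a ^ s := by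
  rw [← Finset.sum_Icc_comp_sub (fun a => tailInvSq n a ^ s) (hkm.trans hm) hm]
  refine Finset.sum_congr rfl fun i hi => ?_
  obtain ⟨hki, him⟩ := Finset.mem_Icc.1 hi
  rw [integral_sum_eq_tailInvSq hX hlaw (hk.trans hki) (him.trans hm)]

lemma sum_Ico_le_integral_of_monotoneOn {f : ℝ → ℝ} {a b : ℕ} (hab : a ≤ b)
    (hf : MonotoneOn f (Ico (a : ℝ) b)) (hfi : IntegrableOn f (Ico (a : ℝ) b)) :
    ∑ i ∈ Finset.Ico a b, f i ≤ ∫ x in a..b, f x := by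
  refine sum_Ico_le_integral_of_le hab (fun i hi x hx => ?_) hfi
  have hai : (a : ℝ) ≤ i := by exact_mod_cast hi.1
  have hib : (i : ℝ) + 1 ≤ b := by exact_mod_cast hi.2
  push_cast at hx
  exact hf ⟨hai, by linarith⟩ ⟨hai.trans hx.1, by linarith [hx.2]⟩ hx.1

lemma natCast_add_two_rpow_le {s : ℝ} (hs₀ : 0 ≤ s) (hs₂ : s ≤ 2) (m : ℕ) :
    ((m + 2 : ℕ) : ℝ) ^ s ≤ 4 * ((m + 1 : ℕ) : ℝ) ^ s := by
  have h4 : (2 : ℝ) ^ s ≤ 4 :=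
    (rpow_le_rpow_of_exponent_le (by norm_num) hs₂).trans_eq (by norm_num)
  calc ((m + 2 : ℕ) : ℝ) ^ s ≤ (2 * ((m + 1 : ℕ) : ℝ)) ^ s :=
        rpow_le_rpow (by positivity) (by push_cast; linarith) hs₀
    _ = 2 ^ s * ((m + 1 : ℕ) : ℝ) ^ s := mul_rpow (by norm_num) (by positivity)
    _ ≤ 4 * ((m + 1 : ℕ) : ℝ) ^ s := by gcongr

/-- Note `oddsPow α 1 = 0` (as `0 ^ (-α) = 0`), so monotonicity holds on `[0, 1)` only. -/
noncomputable def oddsPow (α x : ℝ) : ℝ := x ^ α * (1 - x) ^ (-α)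

section oddsPow

variable {α : ℝ}

lemma oddsPow_nonneg {x : ℝ} (hx : x ∈ Icc (0 : ℝ) 1) : 0 ≤ oddsPow α x :=
  mul_nonneg (rpow_nonneg hx.1 _) (rpow_nonneg (sub_nonneg.2 hx.2) _)

lemma monotoneOn_oddsPow (hα : 0 ≤ α) : MonotoneOn (oddsPow α) (Ico 0 1) := by
  intro x hx y hy hxy
  exact mul_le_mul (rpow_le_rpow hx.1 hxy hα)
    (rpow_le_rpow_of_nonpos (sub_pos.2 hy.2) (by linarith) (neg_nonpos.2 hα))
    (rpow_nonneg (by linarith [hx.2]) _) (rpow_nonneg (hx.1.trans hxy) _)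

lemma oddsPow_le {x t : ℝ} (hα : 0 ≤ α) (hx : x ∈ Icc 0 t) (ht : t ≤ 1) :
    oddsPow α x ≤ t ^ α * (1 - x) ^ (-α) :=
  mul_le_mul_of_nonneg_right (rpow_le_rpow hx.1 hx.2 hα)
    (rpow_nonneg (by linarith [hx.2]) _)

lemma intervalIntegrable_one_sub_rpow_neg (hα : α < 1) (a b : ℝ) :
    IntervalIntegrable (fun x : ℝ => (1 - x) ^ (-α)) volume a b := by
  simpa using (intervalIntegrable_rpow' (r := -α) (a := 1 - a) (b := 1 - b)
    (by linarith)).comp_sub_left 1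

lemma intervalIntegrable_oddsPow (hα₀ : 0 ≤ α) (hα₁ : α < 1) {a b : ℝ}
    (ha : a ∈ Icc (0 : ℝ) 1) (hb : b ∈ Icc (0 : ℝ) 1) :
    IntervalIntegrable (oddsPow α) volume a b := by
  refine (intervalIntegrable_one_sub_rpow_neg hα₁ a b).mono_fun
    (by unfold oddsPow; fun_prop) (ae_restrict_of_forall_mem measurableSet_uIoc fun x hx => ?_)
  have hx : x ∈ Icc (0 : ℝ) 1 :=
    uIcc_subset_Icc ha hb (uIoc_subset_uIcc hx)
  change ‖oddsPow α x‖ ≤ ‖(1 - x) ^ (-α)‖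
  rw [norm_of_nonneg (oddsPow_nonneg hx), norm_of_nonneg (rpow_nonneg (by linarith [hx.2]) _)]
  simpa using oddsPow_le hα₀ hx le_rfl

lemma integral_oddsPow_le (hα₀ : 0 ≤ α) (hα₁ : α < 1) {t : ℝ} (ht : t ∈ Icc (0 : ℝ) 1) :
    ∫ x in (0 : ℝ)..t, oddsPow α x ≤ t ^ (1 + α) / (1 - α) := by
  have hprim : ∫ x in (0 : ℝ)..t, (1 - x) ^ (-α) = (1 - (1 - t) ^ (1 - α)) / (1 - α) := by
    rw [integral_comp_sub_left (fun x => x ^ (-α)), integral_rpow (Or.inl (by linarith))]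
    norm_num [show -α + 1 = 1 - α by ring]
  have hconc : 1 - t ≤ (1 - t) ^ (1 - α) :=
    self_le_rpow_of_le_one (by linarith [ht.2]) (by linarith [ht.1]) (by linarith)
  calc ∫ x in (0 : ℝ)..t, oddsPow α x
      ≤ ∫ x in (0 : ℝ)..t, t ^ α * (1 - x) ^ (-α) :=
        integral_mono_on ht.1
          (intervalIntegrable_oddsPow hα₀ hα₁ ⟨le_rfl, zero_le_one⟩ ht)
          ((intervalIntegrable_one_sub_rpow_neg hα₁ 0 t).const_mul _)
          (fun x hx => oddsPow_le hα₀ hx ht.2)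
    _ = t ^ α * ((1 - (1 - t) ^ (1 - α)) / (1 - α)) := by
        rw [intervalIntegral.integral_const_mul, hprim]
    _ ≤ t ^ α * (t / (1 - α)) := by
        gcongr
        · exact rpow_nonneg ht.1 _
        · linarith
    _ = t ^ (1 + α) / (1 - α) := by
        rw [rpow_add' ht.1 (by linarith), rpow_one]
        ring

lemma rpow_mul_oddsPow_div {N u : ℝ} (hu : 0 < u) (huN : u ≤ N) :
    N ^ α * oddsPow α (u / N) = (u⁻¹ - N⁻¹) ^ (-α) := by
  have hN : 0 < N := hu.trans_le huN
  have h1 : 1 - u / N = u * (u⁻¹ - N⁻¹) := by field_simp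
  have h2 : 0 ≤ u⁻¹ - N⁻¹ := sub_nonneg.2 (inv_anti₀ hu huN)
  rw [oddsPow, h1, mul_rpow hu.le h2, div_rpow hu.le hN.le, rpow_neg hu.le]
  field_simp [(rpow_pos_of_pos hN α).ne', (rpow_pos_of_pos hu α).ne']

lemma integral_rpow_mul_oddsPow_div {N : ℝ} (hN : 0 < N) (a b : ℝ) :
    ∫ u in a..b, N ^ α * oddsPow α (u / N)
      = N ^ (1 + α) * ∫ x in a / N..b / N, oddsPow α x := by
  rw [intervalIntegral.integral_const_mul, integral_comp_div _ hN.ne',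
    smul_eq_mul, rpow_add hN, rpow_one]
  ring

lemma monotoneOn_rpow_mul_oddsPow_div (hα : 0 ≤ α) {N : ℝ} (hN : 0 < N) :
    MonotoneOn (fun u => N ^ α * oddsPow α (u / N)) (Ico 0 N) := by
  intro u hu v hv huv
  have hmem : ∀ w ∈ Ico 0 N, w / N ∈ Ico (0 : ℝ) 1 := fun w hw =>
    ⟨div_nonneg hw.1 hN.le, (div_lt_one hN).2 hw.2⟩
  exact mul_le_mul_of_nonneg_left
    (monotoneOn_oddsPow hα (hmem u hu) (hmem v hv) (div_le_div_of_nonneg_right huv hN.le))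
    (rpow_nonneg hN.le _)

lemma integrableOn_rpow_mul_oddsPow_div (hα₀ : 0 ≤ α) (hα₁ : α < 1) {N : ℝ} (hN : 0 < N) :
    IntegrableOn (fun u => N ^ α * oddsPow α (u / N)) (Icc 0 N) := by
  have h := (IntervalIntegrable.comp_mul_left_iff (f := oddsPow α) (a := 0) (b := 1)
    (inv_ne_zero hN.ne')).2 (intervalIntegrable_oddsPow hα₀ hα₁ ⟨le_rfl, zero_le_one⟩
      ⟨zero_le_one, le_rfl⟩)
  simp only [zero_div, one_div, inv_inv] at h
  rw [← intervalIntegrable_iff_integrableOn_Icc_of_le hN.le]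
  simpa only [div_eq_inv_mul] using h.const_mul (N ^ α)

lemma integral_rpow_mul_oddsPow_div_le (hα₀ : 0 ≤ α) (hα₁ : α < 1) {N b : ℝ} (hN : 0 < N)
    (hb : 0 ≤ b) (hbN : b ≤ N) :
    ∫ u in (0 : ℝ)..b, N ^ α * oddsPow α (u / N) ≤ b ^ (1 + α) / (1 - α) := by
  rw [integral_rpow_mul_oddsPow_div hN, zero_div]
  calc N ^ (1 + α) * ∫ x in (0 : ℝ)..b / N, oddsPow α x
      ≤ N ^ (1 + α) * ((b / N) ^ (1 + α) / (1 - α)) := by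
        gcongr
        exact integral_oddsPow_le hα₀ hα₁ ⟨div_nonneg hb hN.le, (div_le_one hN).2 hbN⟩
    _ = b ^ (1 + α) / (1 - α) := by
        rw [div_rpow hb hN.le]
        field_simp [(rpow_pos_of_pos hN (1 + α)).ne']

lemma rpow_mul_oddsPow_div_le_tailInvSq_rpow (hα : 0 ≤ α) {n a : ℕ} (ha : 0 < a)
    (han : a < n) : (n : ℝ) ^ α * oddsPow α (a / n) ≤ tailInvSq n a ^ (-α) := by
  have ha' : (0 : ℝ) < a := by exact_mod_cast ha
  rw [rpow_mul_oddsPow_div ha' (by exact_mod_cast han.le)]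
  exact rpow_le_rpow_of_nonpos (tailInvSq_pos han) (tailInvSq_le ha han.le) (neg_nonpos.2 hα)

lemma tailInvSq_rpow_le_rpow_mul_oddsPow_div (hα : 0 ≤ α) {n a : ℕ} {N : ℝ}
    (haN : (a : ℝ) + 1 < N) (hN : N ≤ n + 1) (han : a ≤ n) :
    tailInvSq n a ^ (-α) ≤ N ^ α * oddsPow α (((a + 1 : ℕ) : ℝ) / N) := by
  have ha : (0 : ℝ) < a + 1 := by positivity
  push_cast
  rw [rpow_mul_oddsPow_div ha haN.le]
  refine rpow_le_rpow_of_nonpos (sub_pos.2 (inv_strictAnti₀ ha haN)) ?_ (neg_nonpos.2 hα)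
  calc ((a : ℝ) + 1)⁻¹ - N⁻¹ ≤ ((a : ℝ) + 1)⁻¹ - ((n : ℝ) + 1)⁻¹ := by
        gcongr; linarith
    _ ≤ tailInvSq n a := inv_sub_inv_le_tailInvSq han

lemma integral_le_sum_tailInvSq_rpow (hα : 0 ≤ α) {n p q : ℕ} (hp : 1 ≤ p)
    (hpq : p ≤ q) (hqn : q < n) :
    ∫ u in ((p : ℝ) - 1)..(q : ℝ), (n : ℝ) ^ α * oddsPow α (u / n)
      ≤ ∑ a ∈ Finset.Icc p q, tailInvSq n a ^ (-α) := by
  obtain ⟨p, rfl⟩ : ∃ p', p = p' + 1 := ⟨p - 1, by omega⟩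
  have hn : (0 : ℝ) < n := by exact_mod_cast (Nat.zero_lt_of_lt hqn)
  have hmono : MonotoneOn (fun u => (n : ℝ) ^ α * oddsPow α (u / n)) (Icc (p : ℝ) q) :=
    (monotoneOn_rpow_mul_oddsPow_div hα hn).mono fun u hu =>
      ⟨(Nat.cast_nonneg p).trans hu.1, hu.2.trans_lt (by exact_mod_cast hqn)⟩
  calc ∫ u in ((p + 1 : ℕ) : ℝ) - 1..(q : ℝ), (n : ℝ) ^ α * oddsPow α (u / n)
      = ∫ u in (p : ℝ)..(q : ℝ), (n : ℝ) ^ α * oddsPow α (u / n) := by push_cast; ring_nf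
    _ ≤ ∑ i ∈ Finset.Ico p q, (n : ℝ) ^ α * oddsPow α (((i + 1 : ℕ) : ℝ) / n) :=
        hmono.integral_le_sum_Ico (by omega)
    _ = ∑ a ∈ Finset.Icc (p + 1) q, (n : ℝ) ^ α * oddsPow α (a / n) := by
        rw [Finset.sum_Ico_add' (fun a : ℕ => (n : ℝ) ^ α * oddsPow α (a / n)),
          Finset.Ico_add_one_right_eq_Icc]
    _ ≤ ∑ a ∈ Finset.Icc (p + 1) q, tailInvSq n a ^ (-α) := by
        refine Finset.sum_le_sum fun a ha => ?_
        obtain ⟨hpa, haq⟩ := Finset.mem_Icc.1 ha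
        exact rpow_mul_oddsPow_div_le_tailInvSq_rpow hα (by omega) (by omega)

lemma sum_tailInvSq_rpow_le_integral (hα₀ : 0 ≤ α) (hα₁ : α < 1) {n p q : ℕ} {N : ℝ}
    (hpq : p ≤ q) (hqN : ((q + 2 : ℕ) : ℝ) ≤ N) (hN : N ≤ n + 1) (hqn : q ≤ n) :
    ∑ a ∈ Finset.Icc p q, tailInvSq n a ^ (-α)
      ≤ ∫ u in (0 : ℝ)..((q + 2 : ℕ) : ℝ), N ^ α * oddsPow α (u / N) := by
  have hNpos : (0 : ℝ) < N := lt_of_lt_of_le (by positivity) hqN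
  set ψ : ℝ → ℝ := fun u => N ^ α * oddsPow α (u / N)
  have hsub : Ico ((p + 1 : ℕ) : ℝ) ((q + 2 : ℕ) : ℝ) ⊆ Ico 0 N := fun u hu =>
    ⟨(Nat.cast_nonneg _).trans hu.1, hu.2.trans_le hqN⟩
  calc ∑ a ∈ Finset.Icc p q, tailInvSq n a ^ (-α)
      ≤ ∑ a ∈ Finset.Icc p q, ψ ((a + 1 : ℕ) : ℝ) := by
        refine Finset.sum_le_sum fun a ha => ?_
        have haq : (a : ℝ) + 2 ≤ q + 2 := by
          exact_mod_cast Nat.add_le_add_right (Finset.mem_Icc.1 ha).2 2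
        push_cast at hqN
        exact tailInvSq_rpow_le_rpow_mul_oddsPow_div hα₀ (by linarith) hN
          ((Finset.mem_Icc.1 ha).2.trans hqn)
    _ = ∑ j ∈ Finset.Ico (p + 1) (q + 2), ψ j := by
        rw [← Finset.Ico_add_one_right_eq_Icc, Finset.sum_Ico_add' (fun j : ℕ => ψ j)]
    _ ≤ ∫ u in ((p + 1 : ℕ) : ℝ)..((q + 2 : ℕ) : ℝ), ψ u :=
        sum_Ico_le_integral_of_monotoneOn (by omega)
          ((monotoneOn_rpow_mul_oddsPow_div hα₀ hNpos).mono hsub)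
          ((integrableOn_rpow_mul_oddsPow_div hα₀ hα₁ hNpos).mono_set
            (hsub.trans Ico_subset_Icc_self))
    _ ≤ ∫ u in (0 : ℝ)..((q + 2 : ℕ) : ℝ), ψ u := by
        refine integral_mono_interval (Nat.cast_nonneg _) (by gcongr; omega) le_rfl
          (ae_restrict_of_forall_mem measurableSet_Ioc fun u hu => ?_)
          ((intervalIntegrable_iff_integrableOn_Icc_of_le (Nat.cast_nonneg _)).2
            ((integrableOn_rpow_mul_oddsPow_div hα₀ hα₁ hNpos).mono_set
              (Icc_subset_Icc le_rfl hqN)))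
        exact mul_nonneg (rpow_nonneg hNpos.le _) (oddsPow_nonneg
          ⟨div_nonneg hu.1.le hNpos.le, (div_le_one hNpos).2 (hu.2.trans hqN)⟩)

lemma sum_tailInvSq_rpow_le (hα₀ : 0 ≤ α) (hα₁ : α < 1) {n p q : ℕ} (hpq : p ≤ q)
    (hqn : q < n) :
    ∑ a ∈ Finset.Icc p q, tailInvSq n a ^ (-α) ≤ 4 / (1 - α) * ((q + 1 : ℕ) : ℝ) ^ (1 + α) := by
  have hN : ((q + 2 : ℕ) : ℝ) ≤ n + 1 := by exact_mod_cast (by omega : q + 2 ≤ n + 1)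
  calc ∑ a ∈ Finset.Icc p q, tailInvSq n a ^ (-α)
      ≤ ∫ u in (0 : ℝ)..((q + 2 : ℕ) : ℝ), ((n : ℝ) + 1) ^ α * oddsPow α (u / (n + 1)) :=
        sum_tailInvSq_rpow_le_integral hα₀ hα₁ hpq hN le_rfl hqn.le
    _ ≤ ((q + 2 : ℕ) : ℝ) ^ (1 + α) / (1 - α) :=
        integral_rpow_mul_oddsPow_div_le hα₀ hα₁ (by positivity) (Nat.cast_nonneg _) hN
    _ ≤ 4 / (1 - α) * ((q + 1 : ℕ) : ℝ) ^ (1 + α) := by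
        rw [div_mul_eq_mul_div, div_le_div_iff_of_pos_right (sub_pos.2 hα₁)]
        exact natCast_add_two_rpow_le (by linarith) (by linarith) q

end oddsPow

theorem stmt_8_general
    (d : ℝ) (hd : 1 < d)
    (Ω : ℕ → Type) [∀ n, MeasureSpace (Ω n)]
    (X : (n : ℕ) → ℕ → Ω n → ℝ)
    (hXmeas : ∀ n i, Measurable (X n i))
    (hXlaw : ∀ n i, 1 ≤ i → i ≤ n →
      Measure.map (X n i) ℙ = expMeasure (((n - i + 1 : ℕ) : ℝ) ^ 2))
    (Y : (n : ℕ) → ℕ → Ω n → ℝ)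
    (hY : ∀ n k o, Y n k o = ∑ i ∈ Finset.Icc 1 k, X n i o)
    (Ξ : (n : ℕ) → ℕ → ℕ → ℝ)
    (hΞ : ∀ n κ k, Ξ n κ k = ∑ i ∈ Finset.Icc k (n - κ),
      (∫ o, Y n i o ∂(ℙ : Measure (Ω n))) ^ (1/d - 1)) :
    (∃ C : ℝ, 0 < C ∧ ∀ n κ k : ℕ, 1 ≤ κ → κ ≤ n - 1 → 1 ≤ k → k ≤ n - κ →
      Ξ n κ k ≤ C * ((n - k + 1 : ℕ) : ℝ) ^ (2 - 1/d))
    ∧ (∀ n κ k : ℕ, 1 ≤ κ → κ ≤ n - 1 → 2 ≤ k → k ≤ n - κ →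
      (n : ℝ) ^ (2 - 1/d)
          * (∫ x in (((κ : ℝ) - 1) / n)..(((n - k : ℕ) : ℝ) / n),
              x ^ (1 - 1/d) * (1 - x) ^ (1/d - 1))
        ≤ Ξ n κ k
      ∧ Ξ n κ k ≤ (n : ℝ) ^ (2 - 1/d)
          * (∫ x in (0:ℝ)..(((n - k + 2 : ℕ) : ℝ) / n),
              x ^ (1 - 1/d) * (1 - x) ^ (1/d - 1))) := by
  set α := 1 - 1 / d with hα
  have hα₀ : 0 ≤ α := by rw [hα, sub_nonneg, div_le_one (by linarith)]; exact hd.le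
  have hα₁ : α < 1 := by rw [hα]; linarith [one_div_pos.2 (zero_lt_one.trans hd)]
  rw [show 1 / d - 1 = -α by ring] at hΞ ⊢
  rw [show 2 - 1 / d = 1 + α by ring,
    show (fun x : ℝ => x ^ α * (1 - x) ^ (-α)) = oddsPow α from rfl]
  have hΞsum : ∀ n κ k, κ ≤ n → 1 ≤ k → k ≤ n - κ →
      Ξ n κ k = ∑ a ∈ Finset.Icc κ (n - k), tailInvSq n a ^ (-α) := fun n κ k hκ hk hkm => by
    simp_rw [hΞ, hY]
    rw [sum_integral_rpow_eq_sum_tailInvSq _ (hXmeas n) (hXlaw n) hk hkm (Nat.sub_le n κ),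
      Nat.sub_sub_self hκ]
  refine ⟨⟨4 / (1 - α), div_pos four_pos (sub_pos.2 hα₁), fun n κ k hκ hκn hk hkm => ?_⟩,
    fun n κ k hκ hκn hk hkm => ⟨?_, ?_⟩⟩
  · rw [hΞsum n κ k (by omega) hk hkm]
    exact sum_tailInvSq_rpow_le hα₀ hα₁ (by omega) (by omega)
  · have hn : (0 : ℝ) < n := by exact_mod_cast (by omega : 0 < n)
    rw [hΞsum n κ k (by omega) (by omega) hkm, ← integral_rpow_mul_oddsPow_div hn]
    exact integral_le_sum_tailInvSq_rpow hα₀ hκ (by omega) (by omega)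
  · have hn : (0 : ℝ) < n := by exact_mod_cast (by omega : 0 < n)
    have h := sum_tailInvSq_rpow_le_integral hα₀ hα₁ (p := κ) (N := n) (by omega)
      (by exact_mod_cast (by omega : n - k + 2 ≤ n)) (by linarith) (Nat.sub_le n k)
    rwa [integral_rpow_mul_oddsPow_div hn, zero_div, ← hΞsum n κ k (by omega) (by omega) hkm] at h

/-- Lemma: bounds on `Ξ_k`.
Let `d > 1` and `Ξ_k = ∑_{i=k}^{m_n} (E Y_i)^{1/d−1}` with `m_n = n − κ_n`.  There is
`C > 0` (depending only on `d`) with `Ξ_k ≤ C (n − k + 1)^{2−1/d}` for `1 ≤ k ≤ m_n`;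
and for `2 ≤ k ≤ m_n`,
`n^{2−1/d} I_{(κ_n−1)/n}((n−k)/n) ≤ Ξ_k ≤ n^{2−1/d} I_0((n−k+2)/n)`,
where `I_a(t) = ∫_a^t x^{1−1/d}(1−x)^{1/d−1} dx`. -/
theorem stmt_8
    (d : ℝ) (hd : 1 < d)
    (Ω : ℕ → Type) [∀ n, MeasureSpace (Ω n)]
    (hprob : ∀ n, IsProbabilityMeasure (ℙ : Measure (Ω n)))
    (X : (n : ℕ) → ℕ → Ω n → ℝ)
    (hXmeas : ∀ n i, Measurable (X n i))
    (hXindep : ∀ n, iIndepFun (fun i : Fin n => X n (i + 1)) ℙ)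
    (hXlaw : ∀ n i, 1 ≤ i → i ≤ n →
      Measure.map (X n i) ℙ = expMeasure (((n - i + 1 : ℕ) : ℝ) ^ 2))
    (Y : (n : ℕ) → ℕ → Ω n → ℝ)
    (hY : ∀ n k o, Y n k o = ∑ i ∈ Finset.Icc 1 k, X n i o)
    (Ξ : (n : ℕ) → ℕ → ℕ → ℝ)
    (hΞ : ∀ n κ k, Ξ n κ k = ∑ i ∈ Finset.Icc k (n - κ),
      (∫ o, Y n i o ∂(ℙ : Measure (Ω n))) ^ (1/d - 1)) :
    (∃ C : ℝ, 0 < C ∧ ∀ n κ k : ℕ, 1 ≤ κ → κ ≤ n - 1 → 1 ≤ k → k ≤ n - κ →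
      Ξ n κ k ≤ C * ((n - k + 1 : ℕ) : ℝ) ^ (2 - 1/d))
    ∧ (∀ n κ k : ℕ, 1 ≤ κ → κ ≤ n - 1 → 2 ≤ k → k ≤ n - κ →
      (n : ℝ) ^ (2 - 1/d)
          * (∫ x in (((κ : ℝ) - 1) / n)..(((n - k : ℕ) : ℝ) / n),
              x ^ (1 - 1/d) * (1 - x) ^ (1/d - 1))
        ≤ Ξ n κ k
      ∧ Ξ n κ k ≤ (n : ℝ) ^ (2 - 1/d)
          * (∫ x in (0:ℝ)..(((n - k + 2 : ℕ) : ℝ) / n),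
              x ^ (1 - 1/d) * (1 - x) ^ (1/d - 1))) :=
  stmt_8_general d hd Ω X hXmeas hXlaw Y hY Ξ hΞ
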